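/- (Pressure function for weights with frequencies.) Let X = {−1,1}^ℕ with uniform Bernoulli measure σ. For each n ≥ 0 let g_n: {−1,1}^ℕ → {−1,1} be a Borel function of the coordinates x_{n+1}, x_{n+2}, …, and set f_n(x) = x_n g_n(x_{n+1}, x_{n+2}, …). Let (w_n) be a sequence of real numbers taking only the values v_0, v_1, …, v_m, and assume the frequencies p_j := lim_{N→∞} #{0 ≤ n < N : w_n = v_j}/N exist for 0 ≤ j ≤ m. Then for every λ ∈ ℝ, φ(λ) := lim_{N→∞} (1/N) log ∫_X exp(λ Σ_{n=0}^{N−1} w_n f_n(x)) dσ(x) exists and φ(λ) = Σ_{j=0}^{m} p_j log(e^{λ v_j} + e^{−λ v_j}) − log 2. -/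

import Mathlib

open MeasureTheory Filter Finset
open scoped ENNReal Topology

noncomputable section

/-- The two-point alphabet `{-1, 1} ⊆ ℝ`. -/
abbrev PM : Type := {r : ℝ // r = -1 ∨ r = 1}

/-- The cylinder `[a_0, …, a_{m-1}]` of all `y` with `y_i = a_i` for `0 ≤ i < m`. -/
def cyl {m : ℕ} (a : Fin m → PM) : Set (ℕ → PM) :=
  {y : ℕ → PM | ∀ i : Fin m, y i = a i}

open scoped Classical

/-! The signs `ε_n(x) = x_n g_n(x)` are themselves independent uniform signs. Since `g_0` only
sees `shift x`, while under `σ` the coordinate `x_0` is uniform and independent of `shift x`,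
the sign `x_0 g_0(x)` is uniform and independent of `shift x`; applying this along the shift
shows that `x ↦ (ε_n(x))_n` carries `σ` to a measure with the same cylinder weights `2^{-m}`.
Hence the exponential moment factors as `∏_{n<N} cosh(λ w_n)`, and grouping the terms of
`(1/N) ∑_{n<N} log cosh(λ w_n)` by the value of `w_n` gives the limit
`∑_j p_j log cosh(λ v_j)`. -/

namespace PM

def neg : PM := ⟨-1, Or.inl rfl⟩

def pos : PM := ⟨1, Or.inr rfl⟩

lemma eq_neg_or_eq_pos (s : PM) : s = neg ∨ s = pos := by
  rcases s with ⟨r, rfl | rfl⟩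
  exacts [Or.inl rfl, Or.inr rfl]

lemma neg_ne_pos : neg ≠ pos := fun h => by
  norm_num [neg, pos, Subtype.ext_iff] at h

instance : Fintype PM :=
  ⟨{neg, pos}, fun s => by rcases eq_neg_or_eq_pos s with rfl | rfl <;> simp⟩

lemma sum_univ {M : Type*} [AddCommMonoid M] (f : PM → M) : ∑ s, f s = f neg + f pos :=
  Finset.sum_pair neg_ne_pos

lemma mul_eq_neg_one_or_eq_one (s : PM) {t : ℝ} (ht : t = -1 ∨ t = 1) :
    (s : ℝ) * t = -1 ∨ (s : ℝ) * t = 1 := by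
  rcases s.2 with hs | hs <;> rcases ht with rfl | rfl <;> simp [hs]

end PM

lemma mul_eq_iff_eq_mul_of_eq_neg_one_or_eq_one {s c t : ℝ} (ht : t = -1 ∨ t = 1) :
    s * t = c ↔ s = c * t := by
  rcases ht with rfl | rfl <;> constructor <;> intro h <;> linarith

attribute [fun_prop] measurable_subtype_coe

def restrictFin (N : ℕ) (x : ℕ → PM) : Fin N → PM := fun i => x i

@[fun_prop]
lemma measurable_restrictFin (N : ℕ) : Measurable (restrictFin N) :=
  measurable_pi_lambda _ fun i => measurable_pi_apply (i : ℕ)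

lemma cyl_eq_preimage {m : ℕ} (a : Fin m → PM) : cyl a = restrictFin m ⁻¹' {a} := by
  ext x
  simp [cyl, restrictFin, funext_iff]

lemma cyl_eq_univ (a : Fin 0 → PM) : cyl a = Set.univ := by
  simp [cyl]

lemma measurableSet_cyl {m : ℕ} (a : Fin m → PM) : MeasurableSet (cyl a) := by
  rw [cyl_eq_preimage]
  exact measurable_restrictFin m (measurableSet_singleton a)

def cylinders : Set (Set (ℕ → PM)) := ⋃ m, Set.range (@cyl m)

lemma isPiSystem_cylinders : IsPiSystem cylinders := by
  simp only [cylinders]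
  rintro _ ⟨_, ⟨m, rfl⟩, a, rfl⟩ _ ⟨_, ⟨k, rfl⟩, b, rfl⟩ ⟨x, hxa, hxb⟩
  refine Set.mem_iUnion.2 ⟨max m k, restrictFin _ x, ?_⟩
  ext y
  simp only [cyl, restrictFin, Set.mem_inter_iff, Set.mem_ofPred_eq, Fin.forall_iff]
    at hxa hxb ⊢
  simp only [← hxa, ← hxb, lt_max_iff, or_imp, forall_and]

lemma generateFrom_cylinders :
    MeasurableSpace.generateFrom cylinders = MeasurableSpace.pi := by
  refine le_antisymm (MeasurableSpace.generateFrom_le ?_) ?_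
  · simp only [cylinders, Set.mem_iUnion, Set.mem_range]
    rintro _ ⟨m, a, rfl⟩
    exact measurableSet_cyl a
  · refine iSup_le fun n => MeasurableSpace.comap_le_iff_le_map.2 fun s _ => ?_
    have hs : (fun x : ℕ → PM => x n) ⁻¹' s =
        ⋃ a ∈ {a : Fin (n + 1) → PM | a (Fin.last n) ∈ s}, cyl a := by
      simp_rw [cyl_eq_preimage, Set.biUnion_preimage_singleton]
      rfl
    rw [MeasurableSpace.map_def, hs]
    refine .biUnion (Set.to_countable _) fun a _ => ?_
    exact MeasurableSpace.measurableSet_generateFrom (Set.mem_iUnion.2 ⟨_, a, rfl⟩)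

lemma measure_ext_of_cyl {μ ν : Measure (ℕ → PM)} [IsFiniteMeasure μ]
    (h : ∀ (m : ℕ) (a : Fin m → PM), μ (cyl a) = ν (cyl a)) : μ = ν := by
  refine ext_of_generate_finite cylinders generateFrom_cylinders.symm isPiSystem_cylinders ?_ ?_
  · simp only [cylinders, Set.mem_iUnion, Set.mem_range]
    rintro _ ⟨m, a, rfl⟩
    exact h m a
  · simpa [cyl_eq_univ] using h 0 Fin.elim0

def shift (x : ℕ → PM) : ℕ → PM := fun n => x (n + 1)

@[fun_prop]
lemma measurable_shift : Measurable shift :=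
  measurable_pi_lambda _ fun n => measurable_pi_apply (n + 1)

lemma cyl_cons {m : ℕ} (c : PM) (a : Fin m → PM) :
    cyl (Fin.cons c a) = {x | x 0 = c} ∩ shift ⁻¹' cyl a := by
  ext x
  simp [cyl, Fin.forall_fin_succ, shift]

def seqCons (c : PM) (y : ℕ → PM) : ℕ → PM
  | 0 => c
  | n + 1 => y n

@[fun_prop]
lemma measurable_seqCons (c : PM) : Measurable (seqCons c) := by
  refine measurable_pi_lambda _ fun n => ?_
  cases n with
  | zero => exact measurable_const
  | succ n => exact measurable_pi_apply n

lemma seqCons_shift_of_pos (c : PM) (x : ℕ → PM) {i : ℕ} (hi : 1 ≤ i) :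
    seqCons c (shift x) i = x i := by
  obtain ⟨j, rfl⟩ := Nat.exists_eq_add_of_le' hi
  rfl

lemma DependsOn.apply_seqCons_shift {f : (ℕ → PM) → ℝ} {k : ℕ}
    (hf : DependsOn f (Set.Ici (k + 1))) (c : PM) (x : ℕ → PM) :
    f (seqCons c (shift x)) = f x :=
  hf fun _ hi => seqCons_shift_of_pos c x (Nat.le_of_add_left_le hi)

lemma measure_eq_sum_measure_preimage_singleton_inter {α β : Type*} [MeasurableSpace α]
    [MeasurableSpace β] [MeasurableSingletonClass β] [Fintype β] (μ : Measure α)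
    {f : α → β} (hf : Measurable f) (S : Set α) : μ S = ∑ b, μ (f ⁻¹' {b} ∩ S) := by
  have := sum_measure_preimage_singleton (μ := μ.restrict S) univ
    fun b _ => hf (measurableSet_singleton b)
  simpa [Measure.restrict_apply (hf (measurableSet_singleton _))] using this.symm

def IsUniformBernoulli (μ : Measure (ℕ → PM)) : Prop :=
  ∀ (m : ℕ) (a : Fin m → PM), μ (cyl a) = (2 : ℝ≥0∞)⁻¹ ^ m

namespace IsUniformBernoulli

variable {σ : Measure (ℕ → PM)}

lemma isProbabilityMeasure (hσ : IsUniformBernoulli σ) : IsProbabilityMeasure σ :=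
  ⟨by simpa [cyl_eq_univ] using hσ 0 Fin.elim0⟩

lemma map_shift_restrict (hσ : IsUniformBernoulli σ) (c : PM) :
    (σ.restrict {x | x 0 = c}).map shift = (2 : ℝ≥0∞)⁻¹ • σ := by
  have := hσ.isProbabilityMeasure
  refine measure_ext_of_cyl fun m a => ?_
  rw [Measure.map_apply measurable_shift (measurableSet_cyl a),
    Measure.restrict_apply (measurable_shift (measurableSet_cyl a)), Set.inter_comm,
    ← cyl_cons, hσ, Measure.smul_apply, hσ, smul_eq_mul, pow_succ']

lemma measure_head_eq_and_shift_mem (hσ : IsUniformBernoulli σ) {h : (ℕ → PM) → PM}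
    (hh : Measurable h) {T : Set (ℕ → PM)} (hT : MeasurableSet T) :
    σ {x | x 0 = h (shift x) ∧ shift x ∈ T} = (2 : ℝ≥0∞)⁻¹ * σ T := by
  have hpiece (s : PM) :
      σ ((fun x => x 0) ⁻¹' {s} ∩ {x | x 0 = h (shift x) ∧ shift x ∈ T}) =
        (2 : ℝ≥0∞)⁻¹ * σ (h ⁻¹' {s} ∩ T) := by
    have hB : MeasurableSet (h ⁻¹' {s} ∩ T) := (hh (measurableSet_singleton s)).inter hT
    rw [← smul_eq_mul, ← Measure.smul_apply, ← hσ.map_shift_restrict s,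
      Measure.map_apply measurable_shift hB, Measure.restrict_apply (measurable_shift hB)]
    congr 1
    ext x
    simp only [Set.mem_inter_iff, Set.mem_preimage, Set.mem_singleton_iff, Set.mem_ofPred_eq]
    grind
  rw [measure_eq_sum_measure_preimage_singleton_inter σ (measurable_pi_apply 0),
    measure_eq_sum_measure_preimage_singleton_inter σ hh T, Finset.mul_sum]
  simp only [hpiece]

end IsUniformBernoulli

section Twist

variable (g : ℕ → (ℕ → PM) → ℝ) (hg : ∀ k x, g k x = -1 ∨ g k x = 1)

def twist (x : ℕ → PM) : ℕ → PM :=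
  fun n => ⟨x n * g n x, PM.mul_eq_neg_one_or_eq_one (x n) (hg n x)⟩

/-- `g (k + 1)` read as a function of `shift x`; the symbol put back in front is immaterial
because `g (k + 1)` ignores coordinate `0`. -/
def tailFactors : ℕ → (ℕ → PM) → ℝ := fun k y => g (k + 1) (seqCons PM.pos y)

variable {g}

lemma tailFactors_eq_neg_one_or_eq_one (hg : ∀ k x, g k x = -1 ∨ g k x = 1) :
    ∀ k y, tailFactors g k y = -1 ∨ tailFactors g k y = 1 :=
  fun k _ => hg (k + 1) _

lemma measurable_twist (hgm : ∀ k, Measurable (g k)) : Measurable (twist g hg) := by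
  refine measurable_pi_lambda _ fun n => ?_
  exact ((measurable_subtype_coe.comp (measurable_pi_apply n)).mul (hgm n)).subtype_mk

lemma measurable_tailFactors (hgm : ∀ k, Measurable (g k)) (k : ℕ) :
    Measurable (tailFactors g k) :=
  (hgm (k + 1)).comp (measurable_seqCons _)

lemma dependsOn_tailFactors (hgd : ∀ k, DependsOn (g k) (Set.Ici (k + 1))) (k : ℕ) :
    DependsOn (tailFactors g k) (Set.Ici (k + 1)) := by
  intro _ _ hxy
  refine hgd (k + 1) fun i hi => ?_
  obtain ⟨j, rfl⟩ := Nat.exists_eq_add_of_le' (Nat.le_of_add_left_le hi)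
  exact hxy j (by simpa using hi)

lemma shift_twist (hgd : ∀ k, DependsOn (g k) (Set.Ici (k + 1))) (x : ℕ → PM) :
    shift (twist g hg x) =
      twist (tailFactors g) (tailFactors_eq_neg_one_or_eq_one hg) (shift x) := by
  funext n
  exact Subtype.ext (congrArg ((x (n + 1) : ℝ) * ·)
    ((hgd (n + 1)).apply_seqCons_shift PM.pos x).symm)

lemma twist_preimage_cyl_cons (hgd : ∀ k, DependsOn (g k) (Set.Ici (k + 1))) {m : ℕ}
    (c : PM) (a : Fin m → PM) :
    twist g hg ⁻¹' cyl (Fin.cons c a) =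
      {x | x 0 = ⟨c * g 0 (seqCons PM.pos (shift x)),
          PM.mul_eq_neg_one_or_eq_one c (hg 0 _)⟩ ∧
        shift x ∈ twist (tailFactors g) (tailFactors_eq_neg_one_or_eq_one hg) ⁻¹' cyl a} := by
  rw [cyl_cons]
  ext x
  simp only [Set.mem_preimage, Set.mem_inter_iff, Set.mem_ofPred_eq, shift_twist hg hgd]
  refine Iff.and ?_ Iff.rfl
  simp only [twist, Subtype.ext_iff, (hgd 0).apply_seqCons_shift]
  exact mul_eq_iff_eq_mul_of_eq_neg_one_or_eq_one (hg 0 x)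

end Twist

namespace IsUniformBernoulli

variable {σ : Measure (ℕ → PM)}

lemma map_twist (hσ : IsUniformBernoulli σ) {g : ℕ → (ℕ → PM) → ℝ}
    (hg : ∀ k x, g k x = -1 ∨ g k x = 1) (hgm : ∀ k, Measurable (g k))
    (hgd : ∀ k, DependsOn (g k) (Set.Ici (k + 1))) :
    IsUniformBernoulli (σ.map (twist g hg)) := by
  intro m
  induction m generalizing g with
  | zero =>
    have := hσ.isProbabilityMeasure
    intro a
    rw [cyl_eq_univ, Measure.map_apply (measurable_twist hg hgm) .univ]
    simp
  | succ m ih =>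
    intro a
    have htail := measurable_twist (tailFactors_eq_neg_one_or_eq_one hg)
      (measurable_tailFactors hgm)
    have hhead : Measurable fun y : ℕ → PM =>
        (⟨a 0 * g 0 (seqCons PM.pos y), PM.mul_eq_neg_one_or_eq_one _ (hg 0 _)⟩ : PM) :=
      (measurable_const.mul ((hgm 0).comp (measurable_seqCons _))).subtype_mk
    rw [← Fin.cons_self_tail a, Measure.map_apply (measurable_twist hg hgm) (measurableSet_cyl _),
      twist_preimage_cyl_cons hg hgd,
      hσ.measure_head_eq_and_shift_mem hhead (htail (measurableSet_cyl _)),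
      ← Measure.map_apply htail (measurableSet_cyl _),
      ih _ (measurable_tailFactors hgm) (dependsOn_tailFactors hgd), pow_succ']

lemma integral_comp_restrictFin (hσ : IsUniformBernoulli σ) {N : ℕ}
    (H : (Fin N → PM) → ℝ) :
    ∫ x, H (restrictFin N x) ∂σ = 2⁻¹ ^ N * ∑ a, H a := by
  have := hσ.isProbabilityMeasure
  rw [← integral_map (by fun_prop) (by fun_prop), integral_fintype .of_finite, Finset.mul_sum]
  refine Finset.sum_congr rfl fun a _ => ?_
  rw [measureReal_def, Measure.map_apply (measurable_restrictFin N) (measurableSet_singleton a),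
    ← cyl_eq_preimage, hσ, smul_eq_mul, ENNReal.toReal_pow, ENNReal.toReal_inv]
  norm_num

lemma integral_exp_mul_sum (hσ : IsUniformBernoulli σ) (w : ℕ → ℝ) (lam : ℝ) (N : ℕ) :
    ∫ x, Real.exp (lam * ∑ n ∈ range N, w n * x n) ∂σ =
      ∏ n ∈ range N, Real.cosh (lam * w n) := by
  have hsum (x : ℕ → PM) :
      ∑ n ∈ range N, w n * x n = ∑ i : Fin N, w i * restrictFin N x i :=
    (Fin.sum_univ_eq_sum_range (fun n => w n * x n) N).symm
  simp_rw [hsum, hσ.integral_comp_restrictFin fun a => Real.exp (lam * ∑ i : Fin N, w i * a i),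
    ← Fin.prod_univ_eq_prod_range (fun n => Real.cosh (lam * w n))]
  calc 2⁻¹ ^ N * ∑ a : Fin N → PM, Real.exp (lam * ∑ i : Fin N, w i * a i)
      = ∑ a : Fin N → PM, ∏ i : Fin N, 2⁻¹ * Real.exp (lam * w i * a i) := by
        simp only [Finset.mul_sum, Finset.prod_mul_distrib, Finset.prod_const, Finset.card_univ,
          Fintype.card_fin, Real.exp_sum, mul_assoc]
    _ = ∏ i : Fin N, ∑ s : PM, 2⁻¹ * Real.exp (lam * w i * s) := by rw [Fintype.prod_sum]
    _ = ∏ i : Fin N, Real.cosh (lam * w i) := by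
        simp only [PM.sum_univ, PM.neg, PM.pos, Real.cosh_eq]
        refine Finset.prod_congr rfl fun i _ => ?_
        rw [mul_neg_one, mul_one]
        ring

lemma integral_exp_mul_sum_twist (hσ : IsUniformBernoulli σ) {g : ℕ → (ℕ → PM) → ℝ}
    (hg : ∀ k x, g k x = -1 ∨ g k x = 1) (hgm : ∀ k, Measurable (g k))
    (hgd : ∀ k, DependsOn (g k) (Set.Ici (k + 1))) (w : ℕ → ℝ) (lam : ℝ) (N : ℕ) :
    ∫ x, Real.exp (lam * ∑ n ∈ range N, w n * (x n * g n x)) ∂σ =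
      ∏ n ∈ range N, Real.cosh (lam * w n) := by
  rw [← (hσ.map_twist hg hgm hgd).integral_exp_mul_sum w lam N,
    integral_map (measurable_twist hg hgm).aemeasurable
      (Measurable.aestronglyMeasurable (by fun_prop))]
  rfl

end IsUniformBernoulli

lemma sum_comp_eq_sum_card_mul {ι α : Type*} [Fintype ι] [DecidableEq α] {v : ι → α}
    (hv : Function.Injective v) {w : ℕ → α} (hw : ∀ n, ∃ j, w n = v j) (F : α → ℝ)
    (s : Finset ℕ) : ∑ n ∈ s, F (w n) = ∑ j, (#{n ∈ s | w n = v j} : ℝ) * F (v j) := by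
  classical
  choose idx hidx using hw
  rw [← Finset.sum_fiberwise s idx]
  refine Finset.sum_congr rfl fun j _ => ?_
  have hfiber : {n ∈ s | idx n = j} = {n ∈ s | w n = v j} :=
    Finset.filter_congr fun n _ => by rw [hidx, hv.eq_iff]
  rw [hfiber, Finset.sum_congr rfl fun n hn => by rw [(Finset.mem_filter.1 hn).2],
    Finset.sum_const, nsmul_eq_mul]

lemma tendsto_sum_div_of_frequencies {ι α : Type*} [Fintype ι] [DecidableEq α] {v : ι → α}
    (hv : Function.Injective v) {w : ℕ → α} (hw : ∀ n, ∃ j, w n = v j) {p : ι → ℝ}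
    (hp : ∀ j, Tendsto (fun N : ℕ => (#{n ∈ range N | w n = v j} : ℝ) / N) atTop
      (𝓝 (p j)))
    (F : α → ℝ) :
    Tendsto (fun N : ℕ => (∑ n ∈ range N, F (w n)) / N) atTop
      (𝓝 (∑ j, p j * F (v j))) := by
  simp_rw [sum_comp_eq_sum_card_mul hv hw, Finset.sum_div, mul_div_right_comm]
  exact tendsto_finsetSum _ fun j _ => (hp j).mul_const _

lemma Real.log_cosh (t : ℝ) :
    Real.log (Real.cosh t) = Real.log (Real.exp t + Real.exp (-t)) - Real.log 2 := by
  rw [Real.cosh_eq, Real.log_div (by positivity) two_ne_zero]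

theorem pressure_for_frequency_weights_general (σ : Measure (ℕ → PM))
    (hσ : ∀ (m : ℕ) (a : Fin m → PM), σ (cyl a) = (2 : ℝ≥0∞)⁻¹ ^ m)
    (g : ℕ → (ℕ → PM) → ℝ)
    (hgm : ∀ k, Measurable (g k))
    (hgv : ∀ k x, g k x = -1 ∨ g k x = 1)
    (hgd : ∀ (k : ℕ) (x y : ℕ → PM), (∀ i, k + 1 ≤ i → x i = y i) → g k x = g k y)
    (m : ℕ) (v : Fin (m + 1) → ℝ) (hvinj : Function.Injective v)
    (w : ℕ → ℝ) (hw : ∀ n, ∃ j, w n = v j)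
    (p : Fin (m + 1) → ℝ)
    (hp : ∀ j, Tendsto
      (fun N : ℕ => (((Finset.range N).filter fun n => w n = v j).card : ℝ) / N)
      atTop (𝓝 (p j)))
    (lam : ℝ) :
    Tendsto (fun N : ℕ =>
        Real.log (∫ x, Real.exp
          (lam * ∑ n ∈ Finset.range N, w n * ((x n : ℝ) * g n x)) ∂σ) / N)
      atTop
      (𝓝 (∑ j, p j * Real.log (Real.exp (lam * v j) + Real.exp (-(lam * v j)))
            - Real.log 2)) := by
  refine ((tendsto_sum_div_of_frequencies hvinj hw hp
    fun t => Real.log (Real.exp (lam * t) + Real.exp (-(lam * t)))).sub_const _).congr' ?_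
  filter_upwards [eventually_ne_atTop 0] with N hN
  rw [IsUniformBernoulli.integral_exp_mul_sum_twist hσ hgv hgm hgd,
    Real.log_prod fun n _ => (Real.cosh_pos _).ne']
  simp only [Real.log_cosh, Finset.sum_sub_distrib, Finset.sum_const, Finset.card_range,
    nsmul_eq_mul, sub_div]
  rw [mul_div_cancel_left₀ _ (Nat.cast_ne_zero.2 hN)]

/-- Pressure function for weights with frequencies: with
`f_n(x) = x_n g_n(x_{n+1}, …)` as in Statement 16 and weights `(w_n)` taking the
distinct values `v_0, …, v_m` with frequencies `p_j`, the pressure exists and equals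
`∑ p_j log(e^{λ v_j} + e^{−λ v_j}) − log 2`. -/
theorem pressure_for_frequency_weights (σ : Measure (ℕ → PM)) [IsProbabilityMeasure σ]
    (hσ : ∀ (m : ℕ) (a : Fin m → PM), σ (cyl a) = (2 : ℝ≥0∞)⁻¹ ^ m)
    (g : ℕ → (ℕ → PM) → ℝ)
    (hgm : ∀ k, Measurable (g k))
    (hgv : ∀ k x, g k x = -1 ∨ g k x = 1)
    (hgd : ∀ (k : ℕ) (x y : ℕ → PM), (∀ i, k + 1 ≤ i → x i = y i) → g k x = g k y)
    (m : ℕ) (v : Fin (m + 1) → ℝ) (hvinj : Function.Injective v)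
    (w : ℕ → ℝ) (hw : ∀ n, ∃ j, w n = v j)
    (p : Fin (m + 1) → ℝ)
    (hp : ∀ j, Tendsto
      (fun N : ℕ => (((Finset.range N).filter fun n => w n = v j).card : ℝ) / N)
      atTop (𝓝 (p j)))
    (lam : ℝ) :
    Tendsto (fun N : ℕ =>
        Real.log (∫ x, Real.exp
          (lam * ∑ n ∈ Finset.range N, w n * ((x n : ℝ) * g n x)) ∂σ) / N)
      atTop
      (𝓝 (∑ j, p j * Real.log (Real.exp (lam * v j) + Real.exp (-(lam * v j)))
            - Real.log 2)) :=
  pressure_for_frequency_weights_general σ hσ g hgm hgv hgd m v hvinj w hw p hp lam
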